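/- Let f be m-strongly convex with L-Lipschitz gradient and 0 < μ < 2/L. Then the reflected proximal operator R_{μf} = 2 prox_{μf} − I is σ-contractive with σ = max(|1−μm|,|1−μL|) < 1: ‖R_{μf}(x) − R_{μf}(y)‖ ≤ σ‖x − y‖. -/

import Mathlib

/-!
From `P x + μ ∇f (P x) = x` the reflection is `2 P x - x = P x - μ ∇f (P x)`: the gradient step
`z ↦ z - μ ∇f z` applied after `P`. The resolvent `P` is nonexpansive because `∇f` is monotone.
For the gradient step, strong convexity and the descent lemma make `f - (m/2)‖·‖²` convex with
an `(L - m)`-smooth gradient; its cocoercivity places `∇f x - ∇f y` in the ball of radius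
`(L - m)/2 ‖x - y‖` about `(m + L)/2 • (x - y)`, so the step is Lipschitz with constant
`|1 - μ(m + L)/2| + μ(L - m)/2 = max |1 - μm| |1 - μL|`.
-/

open InnerProductSpace

theorem abs_add_le_max_abs_add_abs_sub (a b : ℝ) : |a| + b ≤ max |a + b| |a - b| := by
  rcases le_total 0 a with ha | ha
  · exact le_max_of_le_left (by rw [abs_of_nonneg ha]; exact le_abs_self _)
  · refine le_max_of_le_right ?_
    rw [abs_of_nonpos ha, abs_sub_comm]
    linarith [le_abs_self (b - a)]

section InnerProductSpace

variable {E : Type*} [NormedAddCommGroup E] [InnerProductSpace ℝ E]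

theorem sq_norm_sub_le_mul_inner_of_bregman_bounds {h : E → ℝ} {g : E → E} {K : ℝ} (hK : 0 < K)
    (hlow : ∀ x y, h x + ⟪g x, y - x⟫_ℝ ≤ h y)
    (hup : ∀ x y, h y ≤ h x + ⟪g x, y - x⟫_ℝ + K / 2 * ‖y - x‖ ^ 2) (x y : E) :
    ‖g x - g y‖ ^ 2 ≤ K * ⟪g x - g y, x - y⟫_ℝ := by
  have half (x y : E) : h x + ⟪g x, y - x⟫_ℝ + ‖g x - g y‖ ^ 2 / (2 * K) ≤ h y := by
    set d := g x - g y
    -- test the two bounds at the point `y + K⁻¹ • d` minimising the upper bound around `y`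
    have hz₁ := hlow x (y + K⁻¹ • d)
    have hz₂ := hup y (y + K⁻¹ • d)
    have hd : ‖d‖ ^ 2 = ⟪g x, d⟫_ℝ - ⟪g y, d⟫_ℝ := by
      rw [← real_inner_self_eq_norm_sq, inner_sub_left]
    rw [add_sub_right_comm, inner_add_right, real_inner_smul_right] at hz₁
    rw [add_sub_cancel_left, real_inner_smul_right, norm_smul,
      Real.norm_of_nonneg (by positivity)] at hz₂
    field_simp at hz₁ hz₂ ⊢
    nlinarith
  have hxy := half x y
  have hyx := half y x
  rw [norm_sub_rev] at hyx
  have hsum : ⟪g x - g y, x - y⟫_ℝ = -(⟪g x, y - x⟫_ℝ + ⟪g y, x - y⟫_ℝ) := by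
    rw [inner_sub_left, ← neg_sub x y, inner_neg_right]
    ring
  rw [hsum]
  field_simp at hxy hyx
  nlinarith

theorem norm_resolvent_sub_le {g P : E → E} {μ : ℝ}
    (hmono : ∀ x y, 0 ≤ ⟪g x - g y, x - y⟫_ℝ) (hμ : 0 ≤ μ)
    (hP : ∀ v, P v + μ • g (P v) = v) (x y : E) :
    ‖P x - P y‖ ≤ ‖x - y‖ := by
  have hxy : x - y = (P x - P y) + μ • (g (P x) - g (P y)) := by
    nth_rw 1 [← hP x, ← hP y]
    module
  have hsq : ‖x - y‖ ^ 2 = ‖P x - P y‖ ^ 2 + 2 * μ * ⟪g (P x) - g (P y), P x - P y⟫_ℝ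
      + μ ^ 2 * ‖g (P x) - g (P y)‖ ^ 2 := by
    rw [hxy, norm_add_sq_real, real_inner_smul_right, norm_smul, mul_pow, Real.norm_eq_abs,
      sq_abs, real_inner_comm]
    ring
  have hmon := hmono (P x) (P y)
  refine le_of_sq_le_sq ?_ (norm_nonneg _)
  rw [hsq]
  nlinarith [mul_nonneg hμ hmon, sq_nonneg μ, sq_nonneg ‖g (P x) - g (P y)‖]

section CompleteSpace

variable [CompleteSpace E]

theorem le_add_inner_gradient_add_of_lipschitz_gradient {f : E → ℝ} {L : ℝ}
    (hf : Differentiable ℝ f)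
    (hlip : ∀ x y : E, ‖gradient f x - gradient f y‖ ≤ L * ‖x - y‖) (x y : E) :
    f y ≤ f x + ⟪gradient f x, y - x⟫_ℝ + L / 2 * ‖y - x‖ ^ 2 := by
  set u := y - x
  let φ : ℝ → ℝ := fun t ↦ f (x + t • u) - t * ⟪gradient f x, u⟫_ℝ - L / 2 * t ^ 2 * ‖u‖ ^ 2
  have hφ (t : ℝ) : HasDerivAt φ
      (⟪gradient f (x + t • u) - gradient f x, u⟫_ℝ - L * t * ‖u‖ ^ 2) t := by
    have hline : HasDerivAt (fun s : ℝ ↦ x + s • u) u t := by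
      simpa using ((hasDerivAt_id t).smul_const u).const_add x
    have hcomp := (hf (x + t • u)).hasGradientAt.hasFDerivAt.comp_hasDerivAt t hline
    rw [toDual_apply_apply] at hcomp
    have h := (hcomp.sub ((hasDerivAt_id t).mul_const ⟪gradient f x, u⟫_ℝ)).sub
      (((hasDerivAt_pow 2 t).const_mul (L / 2)).mul_const (‖u‖ ^ 2))
    refine h.congr_deriv ?_
    simp only [inner_sub_left]
    push_cast
    ring
  have hanti : AntitoneOn φ (Set.Ici 0) := by
    refine antitoneOn_of_hasDerivWithinAt_nonpos (convex_Ici 0)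
      (HasDerivAt.continuousOn fun t _ ↦ hφ t) (fun t _ ↦ (hφ t).hasDerivWithinAt) ?_
    intro t ht
    rw [interior_Ici, Set.mem_Ioi] at ht
    refine sub_nonpos.mpr ?_
    calc ⟪gradient f (x + t • u) - gradient f x, u⟫_ℝ
        ≤ ‖gradient f (x + t • u) - gradient f x‖ * ‖u‖ := real_inner_le_norm _ _
      _ ≤ L * ‖t • u‖ * ‖u‖ := by
          gcongr
          simpa using hlip (x + t • u) x
      _ = L * t * ‖u‖ ^ 2 := by rw [norm_smul, Real.norm_of_nonneg ht.le]; ring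
  have hφ01 : φ 1 ≤ φ 0 := hanti (Set.mem_Ici.mpr le_rfl) (Set.mem_Ici.mpr zero_le_one) zero_le_one
  simp only [φ, u, one_smul, add_sub_cancel, one_mul, one_pow, zero_smul, add_zero, zero_mul,
    sub_zero, ne_eq, OfNat.ofNat_ne_zero, not_false_eq_true, zero_pow, mul_zero] at hφ01
  linarith

theorem mul_sq_norm_sub_le_inner_gradient_sub {f : E → ℝ} {m : ℝ}
    (hsc : ∀ x y : E, f y ≥ f x + ⟪gradient f x, y - x⟫_ℝ + m / 2 * ‖y - x‖ ^ 2) (x y : E) :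
    m * ‖x - y‖ ^ 2 ≤ ⟪gradient f x - gradient f y, x - y⟫_ℝ := by
  have hxy := hsc x y
  have hyx := hsc y x
  rw [norm_sub_rev, ← neg_sub x y, inner_neg_right] at hxy
  rw [inner_sub_left]
  linarith

theorem sq_norm_gradient_sub_sub_smul_le {f : E → ℝ} {m L : ℝ} (hmL : m ≤ L)
    (hf : Differentiable ℝ f)
    (hsc : ∀ x y : E, f y ≥ f x + ⟪gradient f x, y - x⟫_ℝ + m / 2 * ‖y - x‖ ^ 2)
    (hlip : ∀ x y : E, ‖gradient f x - gradient f y‖ ≤ L * ‖x - y‖) (x y : E) :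
    ‖gradient f x - gradient f y - m • (x - y)‖ ^ 2
      ≤ (L - m) * ⟪gradient f x - gradient f y - m • (x - y), x - y⟫_ℝ := by
  rcases hmL.eq_or_lt with rfl | hlt
  · have hinner : ⟪gradient f x - gradient f y, x - y⟫_ℝ = m * ‖x - y‖ ^ 2 := by
      refine le_antisymm ?_ (mul_sq_norm_sub_le_inner_gradient_sub hsc x y)
      calc ⟪gradient f x - gradient f y, x - y⟫_ℝ
          ≤ ‖gradient f x - gradient f y‖ * ‖x - y‖ := real_inner_le_norm _ _
        _ ≤ m * ‖x - y‖ * ‖x - y‖ := by gcongr; exact hlip x y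
        _ = m * ‖x - y‖ ^ 2 := by ring
    have hnorm := pow_le_pow_left₀ (norm_nonneg _) (hlip x y) 2
    rw [sub_self, zero_mul, norm_sub_sq_real, real_inner_smul_right, hinner, norm_smul, mul_pow,
      Real.norm_eq_abs, sq_abs]
    nlinarith
  · have hquad (x y : E) : m / 2 * ‖y‖ ^ 2
        = m / 2 * ‖x‖ ^ 2 + ⟪m • x, y - x⟫_ℝ + m / 2 * ‖y - x‖ ^ 2 := by
      rw [norm_sub_sq_real, real_inner_smul_left, inner_sub_right, real_inner_self_eq_norm_sq,
        real_inner_comm]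
      ring
    have hcoco := sq_norm_sub_le_mul_inner_of_bregman_bounds
      (h := fun z ↦ f z - m / 2 * ‖z‖ ^ 2) (g := fun z ↦ gradient f z - m • z)
      (sub_pos.mpr hlt) (fun x y ↦ ?_) (fun x y ↦ ?_) x y
    · rwa [show gradient f x - gradient f y - m • (x - y)
        = (gradient f x - m • x) - (gradient f y - m • y) by module]
    · have := hsc x y
      have := hquad x y
      rw [inner_sub_left]
      linarith
    · have := le_add_inner_gradient_add_of_lipschitz_gradient hf hlip x y
      have := hquad x y
      rw [inner_sub_left]
      linarith

theorem norm_gradient_sub_sub_smul_le {f : E → ℝ} {m L : ℝ} (hmL : m ≤ L)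
    (hf : Differentiable ℝ f)
    (hsc : ∀ x y : E, f y ≥ f x + ⟪gradient f x, y - x⟫_ℝ + m / 2 * ‖y - x‖ ^ 2)
    (hlip : ∀ x y : E, ‖gradient f x - gradient f y‖ ≤ L * ‖x - y‖) (x y : E) :
    ‖gradient f x - gradient f y - ((m + L) / 2) • (x - y)‖ ≤ (L - m) / 2 * ‖x - y‖ := by
  have hcoco := sq_norm_gradient_sub_sub_smul_le hmL hf hsc hlip x y
  have hmid : gradient f x - gradient f y - ((m + L) / 2) • (x - y)
      = (gradient f x - gradient f y - m • (x - y)) - ((L - m) / 2) • (x - y) := by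
    module
  have hLm : 0 ≤ L - m := sub_nonneg.mpr hmL
  refine le_of_sq_le_sq ?_ (by positivity)
  rw [hmid, norm_sub_sq_real, real_inner_smul_right, norm_smul, mul_pow, Real.norm_eq_abs, sq_abs]
  nlinarith

theorem norm_sub_smul_gradient_sub_le {f : E → ℝ} {m L μ : ℝ} (hmL : m ≤ L) (hμ : 0 ≤ μ)
    (hf : Differentiable ℝ f)
    (hsc : ∀ x y : E, f y ≥ f x + ⟪gradient f x, y - x⟫_ℝ + m / 2 * ‖y - x‖ ^ 2)
    (hlip : ∀ x y : E, ‖gradient f x - gradient f y‖ ≤ L * ‖x - y‖) (x y : E) :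
    ‖(x - μ • gradient f x) - (y - μ • gradient f y)‖ ≤ max |1 - μ * m| |1 - μ * L| * ‖x - y‖ := by
  have hball := norm_gradient_sub_sub_smul_le hmL hf hsc hlip x y
  have habs := abs_add_le_max_abs_add_abs_sub (1 - μ * ((m + L) / 2)) (μ * ((L - m) / 2))
  rw [show 1 - μ * ((m + L) / 2) + μ * ((L - m) / 2) = 1 - μ * m by ring,
    show 1 - μ * ((m + L) / 2) - μ * ((L - m) / 2) = 1 - μ * L by ring] at habs
  calc ‖(x - μ • gradient f x) - (y - μ • gradient f y)‖
      = ‖(1 - μ * ((m + L) / 2)) • (x - y)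
          - μ • (gradient f x - gradient f y - ((m + L) / 2) • (x - y))‖ := by
        congr 1; module
    _ ≤ |1 - μ * ((m + L) / 2)| * ‖x - y‖ + μ * ((L - m) / 2 * ‖x - y‖) := by
        refine (norm_sub_le _ _).trans ?_
        rw [norm_smul, norm_smul, Real.norm_eq_abs, Real.norm_of_nonneg hμ]
        gcongr
    _ = (|1 - μ * ((m + L) / 2)| + μ * ((L - m) / 2)) * ‖x - y‖ := by ring
    _ ≤ max |1 - μ * m| |1 - μ * L| * ‖x - y‖ := by gcongr

end CompleteSpace

end InnerProductSpace

theorem stmt12 (n : ℕ) (f : EuclideanSpace ℝ (Fin n) → ℝ) (m L μ : ℝ)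
    (hm : 0 < m) (hmL : m ≤ L) (hμ : 0 < μ) (hμL : μ < 2 / L)
    (hdiff : Differentiable ℝ f)
    (hsc : ∀ x y : EuclideanSpace ℝ (Fin n),
      f y ≥ f x + ⟪gradient f x, y - x⟫_ℝ + m / 2 * ‖y - x‖ ^ 2)
    (hlip : ∀ x y : EuclideanSpace ℝ (Fin n),
      ‖gradient f x - gradient f y‖ ≤ L * ‖x - y‖)
    (P : EuclideanSpace ℝ (Fin n) → EuclideanSpace ℝ (Fin n))
    (hP : ∀ v : EuclideanSpace ℝ (Fin n), P v + μ • gradient f (P v) = v) :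
    (∀ x y : EuclideanSpace ℝ (Fin n),
      ‖((2 : ℝ) • P x - x) - ((2 : ℝ) • P y - y)‖ ≤
        max |1 - μ * m| |1 - μ * L| * ‖x - y‖) ∧
    max |1 - μ * m| |1 - μ * L| < 1 := by
  have hμL' : μ * L < 2 := (lt_div_iff₀ (hm.trans_le hmL)).mp hμL
  have hμmL : μ * m ≤ μ * L := mul_le_mul_of_nonneg_left hmL hμ.le
  have hμm : 0 < μ * m := mul_pos hμ hm
  refine ⟨fun x y ↦ ?_, max_lt (abs_sub_lt_iff.mpr ⟨?_, ?_⟩) (abs_sub_lt_iff.mpr ⟨?_, ?_⟩)⟩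
  · have hreflect (v : EuclideanSpace ℝ (Fin n)) :
        (2 : ℝ) • P v - v = P v - μ • gradient f (P v) := by
      linear_combination (norm := module) hP v
    have hmono (x y : EuclideanSpace ℝ (Fin n)) :
        0 ≤ ⟪gradient f x - gradient f y, x - y⟫_ℝ :=
      (mul_nonneg hm.le (sq_nonneg _)).trans (mul_sq_norm_sub_le_inner_gradient_sub hsc x y)
    rw [hreflect, hreflect]
    calc _ ≤ max |1 - μ * m| |1 - μ * L| * ‖P x - P y‖ :=
          norm_sub_smul_gradient_sub_le hmL hμ.le hdiff hsc hlip _ _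
      _ ≤ max |1 - μ * m| |1 - μ * L| * ‖x - y‖ := by
          gcongr
          exact norm_resolvent_sub_le hmono hμ.le hP x y
  all_goals linarith
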